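/- arXiv:1905.02310 — 9 statements merged into one kernel-verified Lean document; each statement's English description precedes it below -/
import Mathlib

section
/- Let (R, m) be a local ring and I an ideal of R. Then mI ≠ m(I : m) if and only if (I : m) ≠ (mI : m). -/
/-!
The equivalence holds with any ideal `J` in place of `m`: both directions follow from the
adjunction `JK ⊆ I ↔ K ⊆ (I : J)` together with `JI ⊆ I ⊆ (I : J)`.
-/

open IsLocalRing

namespace Ideal

variable {R : Type*} [CommSemiring R]

theorem le_colon_iff_mul_le {I J K : Ideal R} : K ≤ I.colon J ↔ J * K ≤ I := by
  rw [mul_le, SetLike.le_def]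
  simp only [Submodule.mem_colon, smul_eq_mul, SetLike.mem_coe]
  exact ⟨fun h s hs r hr => mul_comm s r ▸ h hr s hs, fun h r hr s hs => mul_comm s r ▸ h s hs r hr⟩

theorem mul_colon_le (I J : Ideal R) : J * I.colon J ≤ I :=
  le_colon_iff_mul_le.mp le_rfl

theorem mul_eq_mul_colon_iff_colon_eq_colon_mul (I J : Ideal R) :
    J * I = J * I.colon J ↔ I.colon J = (J * I).colon J := by
  constructor
  · intro h
    refine le_antisymm ?_ (Submodule.colon_mono mul_le_right subset_rfl)
    exact le_colon_iff_mul_le.mpr (h ▸ le_rfl)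
  · intro h
    refine le_antisymm (mul_mono_right le_colon) ?_
    exact h ▸ mul_colon_le (J * I) J

end Ideal

theorem burch_iff_colon_ne_general {R : Type*} [CommRing R] [IsLocalRing R]
    (I : Ideal R) :
    maximalIdeal R * I ≠ maximalIdeal R * Submodule.colon I (maximalIdeal R) ↔
      Submodule.colon I (maximalIdeal R) ≠
        Submodule.colon (maximalIdeal R * I) (maximalIdeal R) :=
  not_congr (Ideal.mul_eq_mul_colon_iff_colon_eq_colon_mul I (maximalIdeal R))

/-- Proposition 2.3 (1)⇔(2): an ideal `I` of a Noetherian local ring `(R, m)` satisfies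
`mI ≠ m(I : m)` if and only if `(I : m) ≠ (mI : m)`. -/
theorem burch_iff_colon_ne {R : Type*} [CommRing R] [IsNoetherianRing R] [IsLocalRing R]
    (I : Ideal R) :
    maximalIdeal R * I ≠ maximalIdeal R * Submodule.colon I (maximalIdeal R) ↔
      Submodule.colon I (maximalIdeal R) ≠
        Submodule.colon (maximalIdeal R * I) (maximalIdeal R) :=
  burch_iff_colon_ne_general I
end

section
/- Let (R, m) be a local ring of positive depth and I a nonzero ideal of R. Then the ideal J = mI is a Burch ideal, i.e., mJ ≠ m(J : m). -/
open IsLocalRing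

/- Since `I ⊆ (J : m)` for `J = mI`, an equality `mJ = m(J : m)` would give `J ⊆ mJ`; Nakayama
then forces `J = 0`, which a nonzerodivisor in `m` rules out. -/

theorem Ideal.le_colon_mul {R : Type*} [CommSemiring R] (I J : Ideal R) :
    I ≤ (J * I).colon (J : Set R) := fun _ hi ↦
  Submodule.mem_colon.mpr fun _ hj ↦ Ideal.mul_mem_mul_rev hj hi

theorem Ideal.mul_ne_bot_of_mem_nonZeroDivisors {R : Type*} [CommSemiring R] {I J : Ideal R}
    {x : R} (hxJ : x ∈ J) (hx : x ∈ nonZeroDivisors R) (hI : I ≠ ⊥) : J * I ≠ ⊥ := by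
  obtain ⟨i, hiI, hi⟩ := Submodule.exists_mem_ne_zero_of_ne_bot hI
  exact (Submodule.ne_bot_iff _).mpr ⟨i * x, Ideal.mul_mem_mul_rev hxJ hiI,
    (mul_right_mem_nonZeroDivisors_eq_zero_iff hx).not.mpr hi⟩

theorem IsLocalRing.eq_bot_of_le_maximalIdeal_mul {R : Type*} [CommRing R] [IsNoetherianRing R]
    [IsLocalRing R] {J : Ideal R} (h : J ≤ maximalIdeal R * J) : J = ⊥ :=
  Submodule.eq_bot_of_le_smul_of_le_jacobson_bot _ J (IsNoetherian.noetherian J) h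
    (maximalIdeal_le_jacobson ⊥)

/-- Example 2.3(2)(3): if `(R, m)` is a Noetherian local ring of positive depth and `I` is a
nonzero ideal, then `J = mI` is a Burch ideal, i.e. `mJ ≠ m(J : m)`. -/
theorem mI_is_burch {R : Type*} [CommRing R] [IsNoetherianRing R] [IsLocalRing R]
    (hdepth : ∃ x ∈ maximalIdeal R, x ∈ nonZeroDivisors R)
    (I : Ideal R) (hI : I ≠ ⊥) :
    maximalIdeal R * (maximalIdeal R * I) ≠
      maximalIdeal R * Submodule.colon (maximalIdeal R * I) (maximalIdeal R) := by
  obtain ⟨x, hxm, hx⟩ := hdepth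
  intro hburch
  refine Ideal.mul_ne_bot_of_mem_nonZeroDivisors hxm hx hI (eq_bot_of_le_maximalIdeal_mul ?_)
  calc maximalIdeal R * I
      ≤ maximalIdeal R * (maximalIdeal R * I).colon (maximalIdeal R) :=
        Ideal.mul_mono_right (Ideal.le_colon_mul I _)
    _ = maximalIdeal R * (maximalIdeal R * I) := hburch.symm
end

section
/- Let (R, m) be a local ring of depth zero, M a free R-module, and f : R → M an R-homomorphism. Then f is a split monomorphism if and only if f(Soc R) ≠ 0, where Soc R = (0 : m). -/
open IsLocalRing

/-- Lemma 3.1(b): let `(R, m)` be a Noetherian local ring of depth zero (`Soc R ≠ 0`),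
`M` a finitely generated free `R`-module and `f : R → M` a homomorphism. Then `f` is a split
monomorphism if and only if `f(Soc R) ≠ 0`, where `Soc R = (0 : m)`. -/
theorem split_mono_iff_socle_image_ne_zero_free {R : Type*} [CommRing R] [IsNoetherianRing R]
    [IsLocalRing R] (hdepth : Submodule.colon (⊥ : Ideal R) (maximalIdeal R) ≠ ⊥)
    {M : Type*} [AddCommGroup M] [Module R M] [Module.Free R M] [Module.Finite R M]
    (f : R →ₗ[R] M) :
    (∃ g : M →ₗ[R] R, g.comp f = LinearMap.id) ↔
      Submodule.map f (Submodule.colon (⊥ : Ideal R) (maximalIdeal R)) ≠ ⊥ := by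
  constructor
  · rintro ⟨g, hg⟩ hmap
    -- pick a nonzero element of the socle
    obtain ⟨x, hx, hx0⟩ := Submodule.exists_mem_ne_zero_of_ne_bot hdepth
    have hfx : f x = 0 := by
      have : f x ∈ Submodule.map f (Submodule.colon (⊥ : Ideal R) (maximalIdeal R)) :=
        Submodule.mem_map_of_mem hx
      rw [hmap] at this
      simpa using this
    have : x = 0 := by
      have := congrArg (fun h : R →ₗ[R] R => h x) hg
      simpa [LinearMap.comp_apply, hfx, eq_comm] using this
    exact hx0 this
  · intro hmap
    obtain ⟨y, ⟨x, hx, rfl⟩, hy0⟩ := Submodule.exists_mem_ne_zero_of_ne_bot hmap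
    set b := Module.Free.chooseBasis R M with hb
    -- some coordinate of f 1 is not in the maximal ideal
    have key : ∃ i, b.repr (f 1) i ∉ maximalIdeal R := by
      by_contra h
      push_neg at h
      apply hy0
      have hfx : f x = x • f 1 := by
        rw [← map_smul, smul_eq_mul, mul_one]
      apply b.repr.injective
      ext i
      rw [hfx, map_smul]
      have : x • (b.repr (f 1) i) ∈ (⊥ : Ideal R) :=
        Submodule.mem_colon.mp hx _ (h i)
      simpa using this
    obtain ⟨i, hi⟩ := key
    have hu : IsUnit (b.repr (f 1) i) := by
      by_contra h
      exact hi (h : b.repr (f 1) i ∈ nonunits R)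
    obtain ⟨u, hu⟩ := hu
    refine ⟨(↑u⁻¹ : R) • b.coord i, ?_⟩
    apply LinearMap.ext_ring
    have hc : (b.coord i) (f 1) = (u : R) := by simp [Module.Basis.coord_apply, hu]
    simp [LinearMap.comp_apply, hc, smul_eq_mul, Units.inv_mul]
end

section
/- Let (R, m) be a local ring of depth zero, M a submodule of a free R-module, and f : R → M an R-homomorphism. Then f is a split monomorphism if and only if f(Soc R) ≠ 0. -/
open IsLocalRing

/-- Lemma 3.1(c): let `(R, m)` be a Noetherian local ring of depth zero (`Soc R ≠ 0`),
`M` a finitely generated module admitting an embedding into a finitely generated free module,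
and `f : R →ₗ M` a homomorphism. Then `f` is a split monomorphism iff `f(Soc R) ≠ 0`. -/
theorem split_mono_iff_socle_image_ne_zero_syzygy {R : Type*} [CommRing R] [IsNoetherianRing R]
    [IsLocalRing R] (hdepth : Submodule.colon (⊥ : Ideal R) (maximalIdeal R) ≠ ⊥)
    {M : Type*} [AddCommGroup M] [Module R M] [Module.Finite R M]
    {F : Type*} [AddCommGroup F] [Module R F] [Module.Free R F] [Module.Finite R F]
    (g₀ : M →ₗ[R] F) (hg₀ : Function.Injective g₀)
    (f : R →ₗ[R] M) :
    (∃ g : M →ₗ[R] R, g.comp f = LinearMap.id) ↔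
      Submodule.map f (Submodule.colon (⊥ : Ideal R) (maximalIdeal R)) ≠ ⊥ := by
  constructor
  · rintro ⟨g, hg⟩ hmap
    -- f is injective since it has a left inverse
    have hf : Function.Injective f := by
      intro x y hxy
      have := congrArg g hxy
      have hx := congrFun (congrArg DFunLike.coe hg) x
      have hy := congrFun (congrArg DFunLike.coe hg) y
      simp only [LinearMap.comp_apply, LinearMap.id_apply] at hx hy
      rw [hx, hy] at this
      exact this
    apply hdepth
    ext x
    simp only [Submodule.mem_bot]
    constructor
    · intro hx
      have : f x ∈ Submodule.map f (Submodule.colon (⊥ : Ideal R) (maximalIdeal R)) :=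
        Submodule.mem_map_of_mem hx
      rw [hmap, Submodule.mem_bot] at this
      have := hf (by simpa using this : f x = f 0)
      exact this
    · rintro rfl; exact Submodule.zero_mem _
  · intro hmap
    -- Basis of F
    let b := Module.Free.chooseBasis R F
    set v : F := g₀ (f 1) with hv
    -- Claim: some coordinate of v is a unit
    by_cases hall : ∀ i, b.repr v i ∈ maximalIdeal R
    · exfalso
      apply hmap
      ext y
      simp only [Submodule.mem_bot, Submodule.mem_map]
      constructor
      · rintro ⟨x, hx, rfl⟩
        have hxv : g₀ (f x) = 0 := by
          have hfx : f x = x • f 1 := by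
            rw [← f.map_smul]; simp
          rw [hfx, g₀.map_smul]
          have : (b.repr (x • v)) = 0 := by
            ext i
            rw [b.repr.map_smul]
            have hxm : x * b.repr v i = 0 := by
              have := Submodule.mem_colon.mp hx (b.repr v i) (hall i)
              simpa using this
            simpa [smul_eq_mul] using hxm
          have hxv0 : x • v = 0 := (LinearEquiv.map_eq_zero_iff b.repr).mp this
          rw [← hv]; exact hxv0
        have := hg₀ (by simpa using hxv : g₀ (f x) = g₀ 0)
        simp [this]
      · rintro rfl
        exact ⟨0, Submodule.zero_mem _, by simp⟩
    · push_neg at hall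
      obtain ⟨i, hi⟩ := hall
      have hu : IsUnit (b.repr v i) := by
        by_contra h
        exact hi ((IsLocalRing.mem_maximalIdeal _).mpr h)
      obtain ⟨u, hu⟩ := hu
      refine ⟨(↑u⁻¹ : R) • ((b.coord i).comp g₀), ?_⟩
      apply LinearMap.ext
      intro x
      simp only [LinearMap.comp_apply, LinearMap.smul_apply, LinearMap.id_apply,
        Module.Basis.coord_apply, LinearMap.id_coe, id_eq]
      have hfx : f x = x • f 1 := by rw [← f.map_smul]; simp
      rw [hfx, g₀.map_smul, b.repr.map_smul]
      simp only [Finsupp.smul_apply, smul_eq_mul, ← hv, ← hu]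
      calc (↑u⁻¹ : R) * (x * ↑u) = x * (↑u⁻¹ * ↑u) := by ring
        _ = x := by simp
end

section
/- Let (R, m) be a local ring of depth > 1, and let I be an ideal of R. Then I is a Burch ideal if and only if there exists a nonzerodivisor a ∈ m such that R/m is isomorphic to a direct summand of the R-module I/aI. -/
open IsLocalRing

/-!
For `a ∈ m`, the residue field is a direct summand of `I/aI` exactly when some
`y ∈ I \ mI` satisfies `my ⊆ aI`: the splitting sends `1` to the class of `y`, and a retraction is
obtained from a functional on the `k`-vector space `I/mI` that is `1` at `y`.

If `I` is Burch, there are `c ∈ m` and `t ∈ I : m` with `ct ∉ mI`. Since `m` contains a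
nonzerodivisor, prime avoidance against `mI : t` and the associated primes of `R` lets us take
`c` to be a nonzerodivisor, and then `y = ct` is such an element.
Conversely, as `depth R/aR > 0`, the condition `my ⊆ aI ⊆ aR` forces `y = as`, and cancelling `a`
gives `s ∈ I : m`; hence `y ∈ m(I : m) \ mI`.
-/

open scoped nonZeroDivisors

section Residue

variable {R : Type*} [CommRing R] [IsLocalRing R] {M : Type*} [AddCommGroup M] [Module R M]

theorem maximalIdeal_smul_top_le_ker (φ : M →ₗ[R] ResidueField R) :
    maximalIdeal R • (⊤ : Submodule R M) ≤ LinearMap.ker φ :=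
  Submodule.smul_le.2 fun r hr x _ => by
    rw [LinearMap.mem_ker, map_smul, Algebra.smul_def, ResidueField.algebraMap_eq,
      (residue_eq_zero_iff r).2 hr, zero_mul]

theorem exists_linearMap_residueField_eq_one {y : M}
    (hy : y ∉ maximalIdeal R • (⊤ : Submodule R M)) :
    ∃ φ : M →ₗ[R] ResidueField R, φ y = 1 := by
  -- `ResidueField R` is by definition `R ⧸ maximalIdeal R`, which acts on `M/mM`.
  let : Module (ResidueField R) (M ⧸ maximalIdeal R • (⊤ : Submodule R M)) :=
    inferInstanceAs (Module (R ⧸ maximalIdeal R) _)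
  have : IsScalarTower R (ResidueField R) (M ⧸ maximalIdeal R • (⊤ : Submodule R M)) :=
    inferInstanceAs (IsScalarTower R (R ⧸ maximalIdeal R) _)
  obtain ⟨ψ, hψ⟩ := Module.Projective.exists_dual_eq_one (ResidueField R)
    (x := (Submodule.Quotient.mk y : M ⧸ maximalIdeal R • (⊤ : Submodule R M)))
    (by rwa [Ne, Submodule.Quotient.mk_eq_zero])
  exact ⟨ψ.restrictScalars R ∘ₗ Submodule.mkQ _, hψ⟩

theorem exists_retraction_residueField_iff {N : Submodule R M}
    (hN : N ≤ maximalIdeal R • ⊤) :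
    (∃ (f : ResidueField R →ₗ[R] M ⧸ N) (g : M ⧸ N →ₗ[R] ResidueField R),
        g.comp f = LinearMap.id) ↔
      ∃ y : M, y ∉ maximalIdeal R • (⊤ : Submodule R M) ∧ ∀ r ∈ maximalIdeal R, r • y ∈ N := by
  constructor
  · rintro ⟨f, g, hgf⟩
    obtain ⟨y, hy⟩ := Submodule.Quotient.mk_surjective N (f 1)
    have hgf1 : g (f 1) = 1 := LinearMap.congr_fun hgf 1
    refine ⟨y, fun hym => ?_, fun r hr => ?_⟩
    · have := maximalIdeal_smul_top_le_ker (g ∘ₗ N.mkQ) hym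
      rw [LinearMap.mem_ker, LinearMap.comp_apply, Submodule.mkQ_apply, hy, hgf1] at this
      exact one_ne_zero this
    · have hr1 : r • (1 : ResidueField R) = 0 :=
        maximalIdeal_smul_top_le_ker LinearMap.id (Submodule.smul_mem_smul hr trivial)
      rw [← Submodule.Quotient.mk_eq_zero, Submodule.Quotient.mk_smul, hy, ← map_smul, hr1,
        map_zero]
  · rintro ⟨y, hy, hmy⟩
    obtain ⟨φ, hφ⟩ := exists_linearMap_residueField_eq_one hy
    refine ⟨(maximalIdeal R).liftQ (LinearMap.toSpanSingleton R _ (Submodule.Quotient.mk y))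
        fun r hr => ?_, N.liftQ φ (hN.trans (maximalIdeal_smul_top_le_ker φ)), ?_⟩
    · rw [LinearMap.mem_ker, LinearMap.toSpanSingleton_apply, ← Submodule.Quotient.mk_smul,
        Submodule.Quotient.mk_eq_zero]
      exact hmy r hr
    · apply Submodule.linearMap_qext
      ext
      change φ ((1 : R) • y) = 1
      rw [one_smul, hφ]

theorem exists_retraction_residueField_quotient_span_smul_iff {a : R}
    (ha : a ∈ maximalIdeal R) (I : Ideal R) :
    (∃ (f : ResidueField R →ₗ[R] (↥I ⧸ (Ideal.span {a} • ⊤ : Submodule R ↥I)))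
        (g : (↥I ⧸ (Ideal.span {a} • ⊤ : Submodule R ↥I)) →ₗ[R] ResidueField R),
        g.comp f = LinearMap.id) ↔
      ∃ y ∈ I, y ∉ maximalIdeal R * I ∧ ∀ r ∈ maximalIdeal R, r * y ∈ Ideal.span {a} * I := by
  rw [exists_retraction_residueField_iff
    (Submodule.smul_mono_left ((Ideal.span_singleton_le_iff_mem _).2 ha))]
  simp only [Submodule.mem_smul_top_iff, Subtype.exists,
    Submodule.coe_smul, smul_eq_mul, exists_prop]

end Residue

section Regular

variable {R : Type*} [CommRing R]

theorem Ideal.exists_mem_nonZeroDivisors_notMem [IsNoetherianRing R] {J K : Ideal R}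
    (hJK : ¬J ≤ K) {x : R} (hxJ : x ∈ J) (hx : x ∈ R⁰) : ∃ e ∈ J, e ∈ R⁰ ∧ e ∉ K := by
  by_contra! h
  have hcover : (J : Set R) ⊆ ⋃ P ∈ insert K (associatedPrimes R R), P := by
    intro e he
    by_cases he' : e ∈ R⁰
    · exact Set.mem_biUnion (Set.mem_insert K _) (h e he he')
    · rw [Set.biUnion_insert, biUnion_associatedPrimes_eq_compl_nonZeroDivisors]
      exact Or.inr he'
  obtain ⟨P, hP, hJP⟩ := (Ideal.subset_union_prime_finite
    ((associatedPrimes.finite R R).insert K) K K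
    (fun P hP hPK _ => ((Set.mem_insert_iff.1 hP).resolve_left hPK).isPrime)).1 hcover
  rcases Set.mem_insert_iff.1 hP with rfl | hass
  · exact hJK hJP
  · have : x ∈ ⋃ P ∈ associatedPrimes R R, P := Set.mem_biUnion hass (hJP hxJ)
    rw [biUnion_associatedPrimes_eq_compl_nonZeroDivisors] at this
    exact this hx

theorem mem_span_singleton_of_mul_mem_of_isRegular_pair {a x z r : R} (ha : a ∈ R⁰)
    (hx : x ∈ R⁰) (hz : ∀ s, z * s ∈ Ideal.span {x} → s ∈ Ideal.span {x})
    (hxr : x * r ∈ Ideal.span {a}) (hzr : z * r ∈ Ideal.span {a}) : r ∈ Ideal.span {a} := by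
  obtain ⟨u, hu⟩ := Ideal.mem_span_singleton'.1 hxr
  obtain ⟨v, hv⟩ := Ideal.mem_span_singleton'.1 hzr
  have hzu : z * u = v * x := by
    rw [← mul_cancel_right_mem_nonZeroDivisors ha]
    linear_combination z * hu - x * hv
  obtain ⟨s, rfl⟩ := Ideal.mem_span_singleton'.1 (hz u (hzu ▸ Ideal.mul_mem_left _ v
    (Ideal.mem_span_singleton_self x)))
  refine Ideal.mem_span_singleton'.2 ⟨s, ?_⟩
  rw [← mul_cancel_left_mem_nonZeroDivisors hx]
  linear_combination hu

theorem Ideal.mem_of_mul_mem_span_singleton_mul {a s : R} {I : Ideal R} (ha : a ∈ R⁰)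
    (h : a * s ∈ Ideal.span {a} * I) : s ∈ I := by
  obtain ⟨z, hz, hza⟩ := Ideal.mem_span_singleton_mul.1 h
  rwa [← (mul_cancel_left_mem_nonZeroDivisors ha).1 hza]

end Regular

namespace Ideal

variable {R : Type*} [CommRing R] [IsLocalRing R]

def IsBurch (I : Ideal R) : Prop :=
  maximalIdeal R * I ≠ maximalIdeal R * I.colon (maximalIdeal R)

theorem IsBurch.exists_nonZeroDivisor [IsNoetherianRing R] {I : Ideal R} (hI : I.IsBurch)
    {x : R} (hxm : x ∈ maximalIdeal R) (hx : x ∈ R⁰) :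
    ∃ a ∈ maximalIdeal R, a ∈ R⁰ ∧
      ∃ y ∈ I, y ∉ maximalIdeal R * I ∧ ∀ r ∈ maximalIdeal R, r * y ∈ span {a} * I := by
  obtain ⟨c, hc, t, ht, hct⟩ :
      ∃ c ∈ maximalIdeal R, ∃ t ∈ I.colon (maximalIdeal R), c * t ∉ maximalIdeal R * I := by
    by_contra! h
    exact hI (le_antisymm (mul_mono_right le_colon) (mul_le.2 h))
  have hmt : ∀ r ∈ maximalIdeal R, r * t ∈ I := fun r hr => by
    rw [mul_comm]
    exact Submodule.mem_colon.1 ht r hr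
  obtain ⟨a, ham, ha, hat⟩ := exists_mem_nonZeroDivisors_notMem
    (K := (maximalIdeal R * I).colon {t}) (fun h => hct (Submodule.mem_colon_singleton.1 (h hc)))
    hxm hx
  refine ⟨a, ham, ha, a * t, hmt a ham, fun h => hat (Submodule.mem_colon_singleton.2 h),
    fun r hr => ?_⟩
  rw [mul_left_comm]
  exact mul_mem_mul (mem_span_singleton_self a) (hmt r hr)

theorem isBurch_of_mul_mem_span_singleton_mul {x z : R} (hxm : x ∈ maximalIdeal R)
    (hzm : z ∈ maximalIdeal R) (hx : x ∈ R⁰)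
    (hz : ∀ s, z * s ∈ span {x} → s ∈ span {x}) {I : Ideal R} {a y : R} (ha : a ∈ R⁰)
    (ham : a ∈ maximalIdeal R) (hy : y ∉ maximalIdeal R * I)
    (hmy : ∀ r ∈ maximalIdeal R, r * y ∈ span {a} * I) : I.IsBurch := by
  obtain ⟨s, rfl⟩ := mem_span_singleton'.1 <| mem_span_singleton_of_mul_mem_of_isRegular_pair ha
    hx hz (mul_le_left (hmy x hxm)) (mul_le_left (hmy z hzm))
  have hs : s ∈ I.colon (maximalIdeal R) := Submodule.mem_colon.2 fun r hr =>
    mem_of_mul_mem_span_singleton_mul ha <| by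
      convert hmy r hr using 1
      rw [smul_eq_mul]
      ring
  intro hI
  apply hy
  rw [hI, mul_comm s a]
  exact mul_mem_mul ham hs

end Ideal

/-- Lemma 2.8: let `(R, m)` be a Noetherian local ring of depth `> 1` (there is a regular
sequence `a, b` of length two in `m`). An ideal `I` is a Burch ideal if and only if there
exists a nonzerodivisor `a ∈ m` such that the residue field `R/m` is a direct summand of
the `R`-module `I/aI`. -/
theorem burch_iff_residue_summand_of_quotient {R : Type*} [CommRing R] [IsNoetherianRing R]
    [IsLocalRing R]
    (hdepth : ∃ a b : R, a ∈ maximalIdeal R ∧ b ∈ maximalIdeal R ∧ a ∈ nonZeroDivisors R ∧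
      ∀ r : R, b * r ∈ Ideal.span {a} → r ∈ Ideal.span {a})
    (I : Ideal R) :
    (maximalIdeal R * I ≠ maximalIdeal R * Submodule.colon I (maximalIdeal R)) ↔
      ∃ a ∈ maximalIdeal R, a ∈ nonZeroDivisors R ∧
        ∃ (f : ResidueField R →ₗ[R] (↥I ⧸ (Ideal.span {a} • ⊤ : Submodule R ↥I)))
          (g : (↥I ⧸ (Ideal.span {a} • ⊤ : Submodule R ↥I)) →ₗ[R] ResidueField R),
          g.comp f = LinearMap.id := by
  obtain ⟨x, z, hxm, hzm, hx, hz⟩ := hdepth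
  change I.IsBurch ↔ _
  constructor
  · intro hI
    obtain ⟨a, ham, ha, hy⟩ := hI.exists_nonZeroDivisor hxm hx
    exact ⟨a, ham, ha, (exists_retraction_residueField_quotient_span_smul_iff ham I).2 hy⟩
  · rintro ⟨a, ham, ha, hsplit⟩
    obtain ⟨y, -, hy, hmy⟩ :=
      (exists_retraction_residueField_quotient_span_smul_iff ham I).1 hsplit
    exact Ideal.isBurch_of_mul_mem_span_singleton_mul hxm hzm hx hz ha ham hy hmy
end

section
/- Let (R, m, k) be a local ring and I an m-primary ideal such that I = (x_1^r, x_2, …, x_n) where x_1, …, x_n is a minimal system of generators of m and r ≥ 1. Then R/I is Gorenstein (its socle is one-dimensional) and m/I is a cyclic R-module. -/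
open IsLocalRing

/-- Let `(R, m, k)` be a Noetherian local ring and `I = (x₁^r, x₂, …, xₙ)` where
`x₁, …, xₙ` is a minimal system of generators of `m` and `r ≥ 1`. Then `R/I` is Gorenstein
(its socle `(I : m)/I` is one-dimensional, i.e. cyclic and annihilated by `m`) and `m/I` is a
cyclic `R`-module. -/
theorem gorenstein_of_special_generators {R : Type*} [CommRing R] [IsNoetherianRing R]
    [IsLocalRing R] {n : ℕ} (x : Fin (n + 1) → R) (r : ℕ) (hr : 1 ≤ r)
    (hspan : Ideal.span (Set.range x) = maximalIdeal R)
    (hmin : ∀ i, x i ∉ (maximalIdeal R) ^ 2 ⊔ Ideal.span (x '' {j | j ≠ i}))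
    (I : Ideal R) (hI : I = Ideal.span ({x 0 ^ r} ∪ x '' {i | i ≠ 0})) :
    (∃ s : R, s ∉ I ∧ Submodule.colon I (maximalIdeal R) = I ⊔ Ideal.span {s}) ∧
      (∃ y : R, maximalIdeal R = I ⊔ Ideal.span {y}) := by
  set m := maximalIdeal R with hm
  have hx0m : x 0 ∈ m := by
    rw [← hspan]; exact Ideal.subset_span ⟨0, rfl⟩
  have hxrI : x 0 ^ r ∈ I := hI ▸ Ideal.subset_span (Or.inl rfl)
  have hxiI : ∀ i, i ≠ 0 → x i ∈ I := fun i h =>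
    hI ▸ Ideal.subset_span (Or.inr ⟨i, h, rfl⟩)
  have hIm : I ≤ m := by
    rw [hI]
    apply Ideal.span_le.2
    rintro y (rfl | ⟨i, hi, rfl⟩)
    · exact Ideal.pow_mem_of_mem m hx0m r hr
    · rw [← hspan]; exact Ideal.subset_span ⟨i, rfl⟩
  have hone : (1 : R) ∉ I := fun h =>
    (maximalIdeal.isMaximal R).ne_top ((Ideal.eq_top_iff_one m).2 (hIm h))
  have hmeq : m = I ⊔ Ideal.span {x 0} := by
    apply le_antisymm
    · rw [← hspan]
      apply Ideal.span_le.2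
      rintro y ⟨i, rfl⟩
      rcases eq_or_ne i 0 with rfl | hi
      · exact Ideal.mem_sup_right (Ideal.subset_span rfl)
      · exact Ideal.mem_sup_left (hxiI i hi)
    · exact sup_le hIm (Ideal.span_le.2 (by simpa using hx0m))
  classical
  have hex : ∃ i, x 0 ^ (i + 1) ∈ I := ⟨r - 1, by rwa [Nat.sub_add_cancel hr]⟩
  set e := Nat.find hex with he
  have he1 : x 0 ^ (e + 1) ∈ I := Nat.find_spec hex
  have he2 : ∀ j < e, x 0 ^ (j + 1) ∉ I := fun j hj => Nat.find_min hex hj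
  have heI : x 0 ^ e ∉ I := by
    rcases Nat.eq_zero_or_pos e with h0 | h0
    · rw [h0, pow_zero]; exact hone
    · have := he2 (e - 1) (by omega)
      rwa [Nat.sub_add_cancel h0] at this
  have key : ∀ j, ∀ z ∈ Submodule.colon I m,
      z ∈ I ⊔ Ideal.span {x 0 ^ (e - j)} → z ∈ I ⊔ Ideal.span {x 0 ^ e} := by
    intro j
    induction j with
    | zero => simpa using fun z _ h => h
    | succ j ih =>
      intro z hz hzm
      by_cases hje : e ≤ j
      · rw [show e - (j + 1) = e - j by omega] at hzm
        exact ih z hz hzm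
      push_neg at hje
      have hsplit : e - j = (e - (j + 1)) + 1 := by omega
      obtain ⟨a, haI, b, hb, rfl⟩ := Submodule.mem_sup.1 hzm
      obtain ⟨c, rfl⟩ := Ideal.mem_span_singleton'.1 hb
      by_cases hc : c ∈ m
      · rw [hmeq] at hc
        obtain ⟨a', ha'I, d, hd, rfl⟩ := Submodule.mem_sup.1 hc
        obtain ⟨d', rfl⟩ := Ideal.mem_span_singleton'.1 hd
        apply ih _ hz
        have hrw : a + (a' + d' * x 0) * x 0 ^ (e - (j + 1)) =
            (a + a' * x 0 ^ (e - (j + 1))) + d' * x 0 ^ (e - j) := by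
          rw [hsplit]; ring
        rw [hrw]
        exact Submodule.mem_sup.2 ⟨_, add_mem haI (I.mul_mem_right _ ha'I), _,
          Ideal.mem_span_singleton'.2 ⟨d', rfl⟩, rfl⟩
      · exfalso
        have hcu : IsUnit c := by
          by_contra h
          exact hc (IsLocalRing.mem_maximalIdeal c |>.2 h)
        have h1 : (a + c * x 0 ^ (e - (j + 1))) * x 0 ∈ I := by
          have := Submodule.mem_colon.1 hz _ hx0m
          rwa [smul_eq_mul] at this
        have h2 : c * x 0 ^ (e - j) ∈ I := by
          have hrw : c * x 0 ^ (e - j) =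
              (a + c * x 0 ^ (e - (j + 1))) * x 0 - a * x 0 := by
            rw [hsplit]; ring
          rw [hrw]
          exact sub_mem h1 (I.mul_mem_right _ haI)
        have h3 : x 0 ^ (e - j) ∈ I := (Ideal.unit_mul_mem_iff_mem I hcu).1 h2
        exact he2 (e - (j + 1)) (by omega) (by rwa [← hsplit])
  refine ⟨⟨x 0 ^ e, heI, le_antisymm ?_ ?_⟩, ⟨x 0, hmeq⟩⟩
  · intro z hz
    apply key e z hz
    apply Submodule.mem_sup_right
    simp [Nat.sub_self, Ideal.span_singleton_one]
  · apply sup_le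
    · intro z hz
      exact Submodule.mem_colon.2 fun p hp => by
        rw [smul_eq_mul]; exact I.mul_mem_right _ hz
    · apply Ideal.span_le.2
      rintro y (rfl : y = x 0 ^ e)
      refine SetLike.mem_coe.2 (Submodule.mem_colon.2 fun p hp => ?_)
      rw [hmeq] at hp
      obtain ⟨a, haI, b, hb, rfl⟩ := Submodule.mem_sup.1 hp
      obtain ⟨c, rfl⟩ := Ideal.mem_span_singleton'.1 hb
      rw [smul_eq_mul, show x 0 ^ e * (a + c * x 0) = x 0 ^ e * a + c * x 0 ^ (e + 1) by ring]
      exact add_mem (I.mul_mem_left _ haI) (I.mul_mem_left _ he1)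
end

section
/- Let (R, m, k) be a local ring with decomposable maximal ideal m = I ⊕ J (internal direct sum of nonzero ideals). Then R is isomorphic to the fibre product (R/I) ×_k (R/J) over the residue field k. -/
open IsLocalRing

/-!
The map `r ↦ (r mod I, r mod J)` lands in the fibre product over `R ⧸ K` whenever `I, J ≤ K`.
Its kernel is `I ⊓ J`, and it is onto as soon as `K ≤ I ⊔ J`: if `a` and `b` agree modulo `K`,
write `a - b = i + j` with `i ∈ I`, `j ∈ J`; then `a - i = b + j` lifts `(a mod I, b mod J)`.
For `m = I ⊕ J` both conditions hold with `K = m`.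
-/

namespace Ideal

variable {R : Type*} [CommRing R] {I J K : Ideal R}

/-- The fibre product `(R ⧸ I) ×_{R ⧸ K} (R ⧸ J)`. -/
def quotientFiberProduct (hI : I ≤ K) (hJ : J ≤ K) : Subring ((R ⧸ I) × (R ⧸ J)) :=
  RingHom.eqLocus ((Quotient.factor hI).comp (RingHom.fst _ _))
    ((Quotient.factor hJ).comp (RingHom.snd _ _))

theorem mk_prod_mk_mem_quotientFiberProduct (hI : I ≤ K) (hJ : J ≤ K) (r : R) :
    (Quotient.mk I r, Quotient.mk J r) ∈ quotientFiberProduct hI hJ := by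
  simp [quotientFiberProduct, Quotient.factor_mk]

def toQuotientFiberProduct (hI : I ≤ K) (hJ : J ≤ K) : R →+* quotientFiberProduct hI hJ :=
  ((Quotient.mk I).prod (Quotient.mk J)).codRestrict _
    (mk_prod_mk_mem_quotientFiberProduct hI hJ)

@[simp]
theorem coe_toQuotientFiberProduct (hI : I ≤ K) (hJ : J ≤ K) (r : R) :
    (toQuotientFiberProduct hI hJ r : (R ⧸ I) × (R ⧸ J)) = (Quotient.mk I r, Quotient.mk J r) :=
  rfl

theorem ker_toQuotientFiberProduct (hI : I ≤ K) (hJ : J ≤ K) :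
    RingHom.ker (toQuotientFiberProduct hI hJ) = I ⊓ J := by
  ext r
  simp only [RingHom.mem_ker, ← Subtype.coe_inj, coe_toQuotientFiberProduct, ZeroMemClass.coe_zero,
    Prod.mk_eq_zero, Quotient.eq_zero_iff_mem, Submodule.mem_inf]

theorem toQuotientFiberProduct_surjective (hI : I ≤ K) (hJ : J ≤ K) (hK : K ≤ I ⊔ J) :
    Function.Surjective (toQuotientFiberProduct hI hJ) := by
  rintro ⟨⟨x, y⟩, hxy⟩
  obtain ⟨a, rfl⟩ := Quotient.mk_surjective x
  obtain ⟨b, rfl⟩ := Quotient.mk_surjective y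
  have hab : a - b ∈ K := by
    simpa [quotientFiberProduct, Quotient.factor_mk, Quotient.eq] using hxy
  obtain ⟨i, hi, j, hj, hij⟩ := Submodule.mem_sup.mp (hK hab)
  refine ⟨a - i, Subtype.ext (Prod.ext ?_ ?_)⟩
  · simpa [Quotient.eq_zero_iff_mem] using hi
  · have : a - i - b = j := by linear_combination -hij
    exact Quotient.eq.mpr (this ▸ hj)

end Ideal

theorem decomposable_maximal_ideal_fibre_product_general {R : Type*} [CommRing R] [IsLocalRing R]
    (I J : Ideal R) (hdisj : I ⊓ J = ⊥)
    (hsum : I ⊔ J = maximalIdeal R) :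
    Nonempty (R ≃+* (RingHom.eqLocus
      ((Ideal.Quotient.factor (S := I) (T := maximalIdeal R) (le_trans le_sup_left hsum.le)).comp
        (RingHom.fst (R ⧸ I) (R ⧸ J)))
      ((Ideal.Quotient.factor (S := J) (T := maximalIdeal R) (le_trans le_sup_right hsum.le)).comp
        (RingHom.snd (R ⧸ I) (R ⧸ J))))) := by
  have hI : I ≤ maximalIdeal R := le_sup_left.trans hsum.le
  have hJ : J ≤ maximalIdeal R := le_sup_right.trans hsum.le
  have hinj : Function.Injective (Ideal.toQuotientFiberProduct hI hJ) := by
    rw [RingHom.injective_iff_ker_eq_bot, Ideal.ker_toQuotientFiberProduct, hdisj]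
  exact ⟨.ofBijective _ ⟨hinj, Ideal.toQuotientFiberProduct_surjective hI hJ hsum.ge⟩⟩

/-- Ogoma's observation: a local ring `(R, m, k)` with decomposable maximal ideal
`m = I ⊕ J` (internal direct sum of nonzero ideals) is isomorphic to the fibre product
`(R/I) ×ₖ (R/J)` over the residue field `k = R/m`. -/
theorem decomposable_maximal_ideal_fibre_product {R : Type*} [CommRing R] [IsLocalRing R]
    (I J : Ideal R) (hI : I ≠ ⊥) (hJ : J ≠ ⊥) (hdisj : I ⊓ J = ⊥)
    (hsum : I ⊔ J = maximalIdeal R) :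
    Nonempty (R ≃+* (RingHom.eqLocus
      ((Ideal.Quotient.factor (S := I) (T := maximalIdeal R) (le_trans le_sup_left hsum.le)).comp
        (RingHom.fst (R ⧸ I) (R ⧸ J)))
      ((Ideal.Quotient.factor (S := J) (T := maximalIdeal R) (le_trans le_sup_right hsum.le)).comp
        (RingHom.snd (R ⧸ I) (R ⧸ J))))) :=
  decomposable_maximal_ideal_fibre_product_general I J hdisj hsum
end

section
/- Let R be a Noetherian local ring and let M, N be finitely generated R-modules with no nonzero free direct summands. If M ⊕ R^a ≅ N ⊕ R^b for some integers a, b ≥ 0, then M ≅ N and a = b. -/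
open IsLocalRing

/-- Every element all of whose coordinates lie in an ideal `I` lies in `I • ⊤`. -/
lemma mem_ideal_smul_top_of_coords {R : Type*} [CommRing R] {b : ℕ} {I : Ideal R}
    {v : Fin b → R} (hv : ∀ i, v i ∈ I) : v ∈ I • (⊤ : Submodule R (Fin b → R)) := by
  have hv' : v = ∑ i, v i • (Pi.single i 1 : Fin b → R) := by
    conv_lhs => rw [← Finset.univ_sum_single v]
    refine Finset.sum_congr rfl fun i _ => ?_
    rw [← Pi.single_smul, smul_eq_mul, mul_one]
  rw [hv']
  exact Submodule.sum_mem _ fun i _ =>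
    Submodule.smul_mem_smul (hv i) Submodule.mem_top

/-- If `M` admits no surjection onto `R` and `p : M × Rᵃ → Rᵇ` is surjective, then
the restriction of `p` to `Rᵃ` is already surjective (Nakayama). -/
lemma surj_restrict {R : Type*} [CommRing R] [IsLocalRing R] {M : Type*}
    [AddCommGroup M] [Module R M]
    (hM : ¬ ∃ g : M →ₗ[R] R, Function.Surjective g) {a b : ℕ}
    (p : (M × (Fin a → R)) →ₗ[R] (Fin b → R)) (hp : Function.Surjective p) :
    Function.Surjective (p ∘ₗ LinearMap.inr R M (Fin a → R)) := by
  rw [← LinearMap.range_eq_top]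
  have hfg : (⊤ : Submodule R (Fin b → R)).FG := Module.Finite.fg_top
  have hle : (⊤ : Submodule R (Fin b → R)) ≤
      LinearMap.range (p ∘ₗ LinearMap.inr R M (Fin a → R)) ⊔
        (maximalIdeal R) • (⊤ : Submodule R (Fin b → R)) := by
    intro x _
    obtain ⟨⟨m0, r⟩, rfl⟩ := hp x
    have hsplit : p (m0, r) = p (m0, 0) + (p ∘ₗ LinearMap.inr R M (Fin a → R)) r := by
      simp [← map_add]
    rw [hsplit]
    refine Submodule.add_mem _ (Submodule.mem_sup_right ?_) (Submodule.mem_sup_left ⟨r, rfl⟩)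
    refine mem_ideal_smul_top_of_coords fun i => ?_
    have hproj : ¬ Function.Surjective
        ((LinearMap.proj i) ∘ₗ p ∘ₗ LinearMap.inl R M (Fin a → R)) := fun hs => hM ⟨_, hs⟩
    have hne : LinearMap.range ((LinearMap.proj i) ∘ₗ p ∘ₗ LinearMap.inl R M (Fin a → R))
        ≠ ⊤ := by
      rwa [Ne, LinearMap.range_eq_top]
    exact le_maximalIdeal hne ⟨m0, rfl⟩
  have := Submodule.le_of_le_smul_of_le_jacobson_bot hfg
    (maximalIdeal_le_jacobson ⊥) hle
  exact top_le_iff.mp (le_trans le_top this)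

/-- Lemma 5.6: let `R` be a Noetherian local ring and `M, N` finitely generated `R`-modules
with no nonzero free direct summands (equivalently, admitting no surjection onto `R`).
If `M ⊕ Rᵃ ≅ N ⊕ Rᵇ` then `M ≅ N` and `a = b`. -/
theorem cancel_free_summands {R : Type*} [CommRing R] [IsNoetherianRing R] [IsLocalRing R]
    {M N : Type*} [AddCommGroup M] [Module R M] [Module.Finite R M]
    [AddCommGroup N] [Module R N] [Module.Finite R N]
    (hM : ¬ ∃ g : M →ₗ[R] R, Function.Surjective g)
    (hN : ¬ ∃ g : N →ₗ[R] R, Function.Surjective g)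
    {a b : ℕ} (h : Nonempty ((M × (Fin a → R)) ≃ₗ[R] (N × (Fin b → R)))) :
    Nonempty (M ≃ₗ[R] N) ∧ a = b := by
  obtain ⟨φ⟩ := h
  -- the projection of the isomorphism onto the free part
  set p : (M × (Fin a → R)) →ₗ[R] (Fin b → R) :=
    (LinearMap.snd R N (Fin b → R)) ∘ₗ φ.toLinearMap with hp_def
  have hp : Function.Surjective p :=
    (Prod.snd_surjective).comp φ.surjective
  have hq : Function.Surjective (p ∘ₗ LinearMap.inr R M (Fin a → R)) :=
    surj_restrict hM p hp
  -- the symmetric projection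
  set p' : (N × (Fin b → R)) →ₗ[R] (Fin a → R) :=
    (LinearMap.snd R M (Fin a → R)) ∘ₗ φ.symm.toLinearMap with hp'_def
  have hp' : Function.Surjective p' :=
    (Prod.snd_surjective).comp φ.symm.surjective
  have hq' : Function.Surjective (p' ∘ₗ LinearMap.inr R N (Fin b → R)) :=
    surj_restrict hN p' hp'
  have hba : b ≤ a := le_of_fin_surjective R _ hq
  have hab : a ≤ b := le_of_fin_surjective R _ hq'
  have heq : a = b := le_antisymm hab hba
  subst heq
  refine ⟨?_, rfl⟩
  -- now the restriction is a surjective endomorphism of a Noetherian module, hence bijective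
  set q : (Fin a → R) →ₗ[R] (Fin a → R) := p ∘ₗ LinearMap.inr R M (Fin a → R) with hq_def
  have hqi : Function.Injective q :=
    IsNoetherian.injective_of_surjective_endomorphism q hq
  let qe : (Fin a → R) ≃ₗ[R] (Fin a → R) := LinearEquiv.ofBijective q ⟨hqi, hq⟩
  -- the two maps
  set f : M →ₗ[R] N := (LinearMap.fst R N (Fin a → R)) ∘ₗ φ.toLinearMap ∘ₗ
    (LinearMap.prod LinearMap.id
      (-(qe.symm.toLinearMap ∘ₗ p ∘ₗ LinearMap.inl R M (Fin a → R)))) with hf_def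
  set g : N →ₗ[R] M := (LinearMap.fst R M (Fin a → R)) ∘ₗ φ.symm.toLinearMap ∘ₗ
    LinearMap.inl R N (Fin a → R) with hg_def
  have hq_apply : ∀ r, q r = p (0, r) := fun r => rfl
  have key : ∀ m : M, φ (m, -qe.symm (p (m, 0))) = (f m, 0) := by
    intro m
    have h2 : p (m, -qe.symm (p (m, 0))) = 0 := by
      have : (m, -qe.symm (p (m, 0))) = (m, (0 : Fin a → R)) + (0, -qe.symm (p (m, 0))) := by
        simp
      rw [this, map_add, ← hq_apply, map_neg]
      have : q (qe.symm (p (m, 0))) = p (m, 0) := qe.apply_symm_apply _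
      rw [this]; abel
    have h1 : (φ (m, -qe.symm (p (m, 0)))).2 = 0 := h2
    have h0 : (φ (m, -qe.symm (p (m, 0)))).1 = f m := rfl
    exact Prod.ext h0 h1
  refine ⟨LinearEquiv.ofLinear f g ?_ ?_⟩
  · -- f ∘ g = id
    ext n
    have hy : ∀ y : M × (Fin a → R), (φ y).2 = 0 → y.2 = -qe.symm (p (y.1, 0)) := by
      intro y hy2
      have hpy : p y = 0 := hy2
      have : p (y.1, 0) + q y.2 = 0 := by
        rw [hq_apply, ← map_add]
        simpa using hpy
      have hqy : q y.2 = -(p (y.1, 0)) := by linear_combination (norm := abel) this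
      have h3 : qe.symm (qe y.2) = qe.symm (-(p (y.1, 0))) := congrArg qe.symm hqy
      rwa [qe.symm_apply_apply, map_neg] at h3
    set y : M × (Fin a → R) := φ.symm (n, 0) with hy_def
    have hy2 : (φ y).2 = 0 := by rw [hy_def, φ.apply_symm_apply]
    have hgn : g n = y.1 := rfl
    have : f (g n) = (φ (y.1, -qe.symm (p (y.1, 0)))).1 := rfl
    rw [LinearMap.comp_apply, LinearMap.id_apply, this, ← hy y hy2]
    have : (y.1, y.2) = y := rfl
    rw [this, hy_def, φ.apply_symm_apply]
  · -- g ∘ f = id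
    ext m
    have : g (f m) = (φ.symm (f m, 0)).1 := rfl
    rw [LinearMap.comp_apply, LinearMap.id_apply, this, ← key m, φ.symm_apply_apply]
end

section
/- Let (R, m, k) be a local ring, x ∈ m \ m^2 an R-regular element, and N a finitely generated R-module with xN = 0 and N ≅ m/(x) (i.e., N is the maximal ideal of R/(x) pulled back). Then there is a split exact sequence 0 → k → m/xm → m/(x) → 0; in particular m/xm ≅ k ⊕ m/(x) as R/(x)-modules. -/
/-! The kernel of `m/xm → m/(x)` is `(x)/xm`, the image of `k → m/xm`, `r ↦ r x`. Since
`x ∉ m²`, the class of `x` in the cotangent space `m/m²` is nonzero, so some `k`-linear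
functional sends it to `1`; composed with `m/xm → m/m²` it is a retraction of `k → m/xm`,
and the splitting lemma gives `m/xm ≅ k × m/(x)`. -/

open IsLocalRing

namespace Ideal

variable {R : Type*} [CommRing R] {I : Ideal R} {x : R}

theorem smul_top_le_comap_subtype (I J : Ideal R) :
    (J • ⊤ : Submodule R I) ≤ Submodule.comap I.subtype J :=
  Submodule.smul_le.2 fun _ hr _ _ => J.mul_mem_right _ hr

theorem comap_subtype_span_singleton (hx : x ∈ I) :
    Submodule.comap I.subtype (span {x}) = R ∙ (⟨x, hx⟩ : I) := by
  ext y
  simp only [Submodule.mem_comap, Submodule.subtype_apply, mem_span_singleton',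
    Submodule.mem_span_singleton, Subtype.ext_iff, SetLike.val_smul, smul_eq_mul]

theorem span_singleton_smul_top_le_smul_top (hx : x ∈ I) :
    (span {x} • ⊤ : Submodule R I) ≤ I • ⊤ :=
  Submodule.smul_mono_left ((span_singleton_le_iff_mem I).2 hx)

def quotientMulLeft (hx : x ∈ I) : (R ⧸ I) →ₗ[R] I ⧸ (span {x} • ⊤ : Submodule R I) :=
  I.liftQ ((span {x} • ⊤ : Submodule R I).mkQ ∘ₗ LinearMap.toSpanSingleton R I ⟨x, hx⟩)
    fun r hr => by
      have hrx : r • (⟨x, hx⟩ : I) = x • ⟨r, hr⟩ := Subtype.ext (mul_comm r x)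
      simp only [LinearMap.mem_ker, LinearMap.comp_apply, LinearMap.toSpanSingleton_apply,
        Submodule.mkQ_apply, Submodule.Quotient.mk_eq_zero, hrx]
      exact Submodule.smul_mem_smul (mem_span_singleton_self x) trivial

theorem exact_quotientMulLeft_factor (hx : x ∈ I) :
    Function.Exact (quotientMulLeft hx)
      (Submodule.factor (smul_top_le_comap_subtype I (span {x}))) := by
  rw [LinearMap.exact_iff, Submodule.factor, Submodule.mapQ, Submodule.ker_liftQ, quotientMulLeft,
    Submodule.range_liftQ, LinearMap.comp_id, Submodule.ker_mkQ, LinearMap.range_comp,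
    ← LinearMap.span_singleton_eq_range, comap_subtype_span_singleton hx]

theorem exists_retraction_quotientMulLeft_of_dual (hx : x ∈ I) (φ : I.Cotangent →ₗ[R] R ⧸ I)
    (hφ : φ (I.toCotangent ⟨x, hx⟩) = 1) :
    ∃ g : I ⧸ (span {x} • ⊤ : Submodule R I) →ₗ[R] R ⧸ I, g ∘ₗ quotientMulLeft hx = .id := by
  refine ⟨φ ∘ₗ Submodule.factor (span_singleton_smul_top_le_smul_top hx), ?_⟩
  ext
  show φ (I.toCotangent ((1 : R) • ⟨x, hx⟩)) = Submodule.Quotient.mk 1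
  rw [one_smul, hφ]
  rfl

end Ideal

namespace IsLocalRing

variable {R : Type*} [CommRing R] [IsLocalRing R] {x : R}

theorem exists_retraction_quotientMulLeft (hx : x ∈ maximalIdeal R)
    (hx2 : x ∉ maximalIdeal R ^ 2) :
    ∃ g : maximalIdeal R ⧸ (Ideal.span {x} • ⊤ : Submodule R (maximalIdeal R)) →ₗ[R]
      ResidueField R, g ∘ₗ Ideal.quotientMulLeft hx = .id := by
  have hx0 : (maximalIdeal R).toCotangent ⟨x, hx⟩ ≠ 0 :=
    mt ((maximalIdeal R).toCotangent_eq_zero _).1 hx2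
  obtain ⟨φ, hφ⟩ := Module.Projective.exists_dual_eq_one (ResidueField R) hx0
  exact Ideal.exists_retraction_quotientMulLeft_of_dual hx (φ.restrictScalars R) hφ

end IsLocalRing

theorem split_exact_sequence_of_regular_element_general {R : Type*} [CommRing R]
    [IsLocalRing R] (x : R) (hx : x ∈ maximalIdeal R) (hx2 : x ∉ maximalIdeal R ^ 2) :
    ∃ π : ((↥(maximalIdeal R)) ⧸ (Ideal.span {x} • ⊤ : Submodule R ↥(maximalIdeal R))) →ₗ[R]
        ((↥(maximalIdeal R)) ⧸
          Submodule.comap (maximalIdeal R).subtype (Ideal.span {x} : Submodule R R)),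
      (∀ y : ↥(maximalIdeal R), π (Submodule.Quotient.mk y) = Submodule.Quotient.mk y) ∧
      Function.Surjective π ∧
      ∃ (f : ResidueField R →ₗ[R]
            ((↥(maximalIdeal R)) ⧸ (Ideal.span {x} • ⊤ : Submodule R ↥(maximalIdeal R))))
        (g : ((↥(maximalIdeal R)) ⧸
            (Ideal.span {x} • ⊤ : Submodule R ↥(maximalIdeal R))) →ₗ[R] ResidueField R),
        g.comp f = LinearMap.id ∧ LinearMap.range f = LinearMap.ker π ∧
        Nonempty ((((↥(maximalIdeal R)) ⧸
            (Ideal.span {x} • ⊤ : Submodule R ↥(maximalIdeal R)))) ≃ₗ[R]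
          (ResidueField R × ((↥(maximalIdeal R)) ⧸
            Submodule.comap (maximalIdeal R).subtype (Ideal.span {x} : Submodule R R)))) := by
  have hπ := Submodule.factor_surjective
    (Ideal.smul_top_le_comap_subtype (maximalIdeal R) (Ideal.span {x}))
  have hexact := Ideal.exact_quotientMulLeft_factor hx
  obtain ⟨g, hg⟩ := exists_retraction_quotientMulLeft hx hx2
  exact ⟨_, fun _ => rfl, hπ, _, g, hg, (LinearMap.exact_iff.1 hexact).symm,
    ⟨(hexact.splitInjectiveEquiv hπ ⟨g, hg⟩).1⟩⟩

/-- Let `(R, m, k)` be a Noetherian local ring and `x ∈ m \ m²` an `R`-regular element.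
Then there is a split exact sequence `0 → k → m/xm → m/(x) → 0`, where `m/xm → m/(x)` is the
natural surjection; in particular `m/xm ≅ k ⊕ m/(x)` as modules. -/
theorem split_exact_sequence_of_regular_element {R : Type*} [CommRing R] [IsNoetherianRing R]
    [IsLocalRing R] (x : R) (hx : x ∈ maximalIdeal R) (hx2 : x ∉ maximalIdeal R ^ 2)
    (hreg : x ∈ nonZeroDivisors R) :
    ∃ π : ((↥(maximalIdeal R)) ⧸ (Ideal.span {x} • ⊤ : Submodule R ↥(maximalIdeal R))) →ₗ[R]
        ((↥(maximalIdeal R)) ⧸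
          Submodule.comap (maximalIdeal R).subtype (Ideal.span {x} : Submodule R R)),
      (∀ y : ↥(maximalIdeal R), π (Submodule.Quotient.mk y) = Submodule.Quotient.mk y) ∧
      Function.Surjective π ∧
      ∃ (f : ResidueField R →ₗ[R]
            ((↥(maximalIdeal R)) ⧸ (Ideal.span {x} • ⊤ : Submodule R ↥(maximalIdeal R))))
        (g : ((↥(maximalIdeal R)) ⧸
            (Ideal.span {x} • ⊤ : Submodule R ↥(maximalIdeal R))) →ₗ[R] ResidueField R),
        g.comp f = LinearMap.id ∧ LinearMap.range f = LinearMap.ker π ∧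
        Nonempty ((((↥(maximalIdeal R)) ⧸
            (Ideal.span {x} • ⊤ : Submodule R ↥(maximalIdeal R)))) ≃ₗ[R]
          (ResidueField R × ((↥(maximalIdeal R)) ⧸
            Submodule.comap (maximalIdeal R).subtype (Ideal.span {x} : Submodule R R)))) :=
  split_exact_sequence_of_regular_element_general x hx hx2
end
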